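/- arXiv:1709.06891 — 8 statements merged into one kernel-verified Lean document; each statement's English description precedes it below -/
import Mathlib

section
/- For every n ∈ ℕ, an exponential polynomial f_n(x) = Σ_{i=0}^{n-1} P_i(x) e^{μ_i x}, with distinct real μ_i and deg P_i = k_i, has at most N_n - 1 real roots, where N_n = Σ_{i=0}^{n-1}(1 + k_i). -/
/-!
After multiplying by `e^{-μ_a x}` one exponent is zero. Differentiating `1 + deg P_a` times then
kills the term `P_a`, while each other term `P_i(x) e^{ν_i x}` with `ν_i ≠ 0` becomes
`Q_i(x) e^{ν_i x}` with `deg Q_i = deg P_i`. By Rolle's theorem each differentiation loses at most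
one zero, so induction on the number of terms gives the bound.
-/

open Polynomial Real
open scoped ContDiff

theorem Set.encard_le_of_forall_finset_card_le {α : Type*} {s : Set α} {k : ℕ∞}
    (h : ∀ t : Finset α, ↑t ⊆ s → (t.card : ℕ∞) ≤ k) : s.encard ≤ k := by
  by_contra! hlt
  lift k to ℕ using hlt.ne_top
  obtain ⟨u, hus, hu⟩ := Set.exists_subset_encard_eq (Order.add_one_le_of_lt hlt)
  have hfin : u.Finite := Set.finite_of_encard_eq_coe hu
  have hcard := h hfin.toFinset (by simpa using hus)
  rw [← hfin.encard_eq_coe_toFinset_card, hu] at hcard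
  exact (ENat.lt_add_one_iff (ENat.natCast_ne_top k)).2 le_rfl |>.not_ge hcard

theorem encard_zeros_le_encard_zeros_deriv_add_one {f : ℝ → ℝ} (hf : Differentiable ℝ f) :
    {x | f x = 0}.encard ≤ {x | deriv f x = 0}.encard + 1 := by
  rcases Set.finite_or_infinite {x | deriv f x = 0} with hfin | hinf
  · refine Set.encard_le_of_forall_finset_card_le fun s hs => ?_
    rw [hfin.encard_eq_coe_toFinset_card]
    refine mod_cast Finset.card_le_of_interleaved fun x hx y hy hxy _ => ?_
    obtain ⟨z, hz, hz'⟩ :=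
      exists_deriv_eq_zero hxy hf.continuous.continuousOn ((hs hx).trans (hs hy).symm)
    exact ⟨z, hfin.mem_toFinset.2 hz', hz⟩
  · simp [hinf.encard_eq]

theorem encard_zeros_le_encard_zeros_iterate_deriv_add {f : ℝ → ℝ} (hf : ContDiff ℝ ∞ f)
    (d : ℕ) : {x | f x = 0}.encard ≤ {x | deriv^[d] f x = 0}.encard + d := by
  induction d with
  | zero => simp
  | succ d ih =>
    have hd := (hf.iterate_deriv d).differentiable (by simp)
    calc _ ≤ {x | deriv^[d] f x = 0}.encard + d := ih
      _ ≤ {x | deriv^[d + 1] f x = 0}.encard + 1 + d := by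
        rw [Function.iterate_succ_apply']
        gcongr
        exact encard_zeros_le_encard_zeros_deriv_add_one hd
      _ = _ := by push_cast; ring

namespace Polynomial

theorem encard_zeros_eval_le_natDegree {p : ℝ[X]} (hp : p ≠ 0) :
    {x | p.eval x = 0}.encard ≤ p.natDegree := by
  have hzeros : {x | p.eval x = 0} = ↑p.roots.toFinset := by
    ext x
    simp [mem_roots hp]
  rw [hzeros, Set.encard_coe_eq_coe_finsetCard]
  exact mod_cast (Multiset.toFinset_card_le _).trans (card_roots' p)

variable {R : Type*} [Semiring R]

noncomputable def twistedDerivative (c : R) (p : R[X]) : R[X] :=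
  derivative p + C c * p

theorem twistedDerivative_zero : twistedDerivative (0 : R) = derivative := by
  funext p
  simp [twistedDerivative]

theorem iterate_twistedDerivative_zero_eq_zero {p : R[X]} {d : ℕ} (h : p.natDegree < d) :
    (twistedDerivative 0)^[d] p = 0 := by
  rw [twistedDerivative_zero]
  exact iterate_derivative_eq_zero h

theorem degree_twistedDerivative [NoZeroDivisors R] {c : R} (hc : c ≠ 0) (p : R[X]) :
    (twistedDerivative c p).degree = p.degree := by
  rcases eq_or_ne p 0 with rfl | hp
  · simp [twistedDerivative]
  rw [twistedDerivative, degree_add_eq_right_of_degree_lt] <;> rw [degree_C_mul hc]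
  exact degree_derivative_lt hp

theorem degree_iterate_twistedDerivative [NoZeroDivisors R] {c : R} (hc : c ≠ 0) (p : R[X])
    (d : ℕ) : ((twistedDerivative c)^[d] p).degree = p.degree := by
  induction d with
  | zero => rfl
  | succ d ih => rw [Function.iterate_succ_apply', degree_twistedDerivative hc, ih]

end Polynomial

section ExpPoly

variable {ι : Type*} (s : Finset ι) (P : ι → ℝ[X]) (μ : ι → ℝ)

noncomputable def expPoly (x : ℝ) : ℝ :=
  ∑ i ∈ s, (P i).eval x * exp (μ i * x)

theorem hasDerivAt_expPoly (x : ℝ) :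
    HasDerivAt (expPoly s P μ) (expPoly s (fun i => twistedDerivative (μ i) (P i)) μ x) x := by
  refine HasDerivAt.fun_sum fun i _ => ?_
  refine ((P i).hasDerivAt x |>.fun_mul ((hasDerivAt_id' x).const_mul (μ i)).exp).congr_deriv ?_
  simp only [twistedDerivative, eval_add, eval_mul, eval_C]
  ring

theorem deriv_expPoly :
    deriv (expPoly s P μ) = expPoly s (fun i => twistedDerivative (μ i) (P i)) μ :=
  funext fun x => (hasDerivAt_expPoly s P μ x).deriv

theorem iterate_deriv_expPoly (d : ℕ) :
    deriv^[d] (expPoly s P μ) = expPoly s (fun i => (twistedDerivative (μ i))^[d] (P i)) μ := by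
  induction d generalizing P with
  | zero => rfl
  | succ d ih =>
    simp only [Function.iterate_succ_apply, deriv_expPoly, ih]

theorem contDiff_expPoly : ContDiff ℝ ∞ (expPoly s P μ) :=
  ContDiff.sum fun i _ => (P i).contDiff_aeval ∞ |>.mul (contDiff_const.mul contDiff_id).exp

theorem expPoly_eq_expPoly_sub_mul_exp (c x : ℝ) :
    expPoly s P μ x = expPoly s P (fun i => μ i - c) x * exp (c * x) := by
  rw [expPoly, expPoly, Finset.sum_mul]
  refine Finset.sum_congr rfl fun i _ => ?_
  rw [mul_assoc, ← exp_add]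
  ring_nf

theorem zeros_expPoly_eq_zeros_expPoly_sub (c : ℝ) :
    {x | expPoly s P μ x = 0} = {x | expPoly s P (fun i => μ i - c) x = 0} := by
  ext x
  simp [expPoly_eq_expPoly_sub_mul_exp s P μ c x, exp_ne_zero]

theorem expPoly_cons_of_eq_zero {a : ι} (ha : a ∉ s) (hPa : P a = 0) :
    expPoly (Finset.cons a s ha) P μ = expPoly s P μ := by
  funext x
  simp [expPoly, hPa]

end ExpPoly

theorem encard_zeros_expPoly_lt {ι : Type*} {s : Finset ι} (hs : s.Nonempty) {P : ι → ℝ[X]}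
    {μ : ι → ℝ} (hμ : Set.InjOn μ s) (hP : ∀ i ∈ s, P i ≠ 0) :
    {x | expPoly s P μ x = 0}.encard < (∑ i ∈ s, (1 + (P i).natDegree) : ℕ) := by
  induction hs using Finset.Nonempty.cons_induction generalizing P μ with
  | singleton a =>
    have hzeros : {x | expPoly {a} P μ x = 0} = {x | (P a).eval x = 0} := by
      ext x
      simp [expPoly, exp_ne_zero]
    rw [hzeros, Finset.sum_singleton]
    refine (encard_zeros_eval_le_natDegree (hP a (by simp))).trans_lt ?_
    exact mod_cast Nat.lt_one_add_iff.2 le_rfl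
  | cons a s ha _ ih =>
    set ν : ι → ℝ := fun i => μ i - μ a
    set d := 1 + (P a).natDegree
    set Q : ι → ℝ[X] := fun i => (twistedDerivative (ν i))^[d] (P i)
    have hν : ∀ i ∈ s, ν i ≠ 0 := fun i hi h =>
      ha (hμ (by simp [hi]) (by simp) (sub_eq_zero.1 h) ▸ hi)
    have hQ : ∀ i ∈ s, (Q i).degree = (P i).degree := fun i hi =>
      degree_iterate_twistedDerivative (hν i hi) _ _
    have hQa : Q a = 0 := by
      simp only [Q, ν, sub_self]
      exact iterate_twistedDerivative_zero_eq_zero (by omega)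
    have hderiv : deriv^[d] (expPoly (s.cons a ha) P ν) = expPoly s Q ν := by
      rw [iterate_deriv_expPoly, expPoly_cons_of_eq_zero _ _ _ _ hQa]
    have hlt := ih (P := Q) (μ := ν) (sub_left_injective.comp_injOn (hμ.mono (by simp)))
      fun i hi hQi => hP i (by simp [hi]) (by rw [← degree_eq_bot, ← hQ i hi, hQi, degree_zero])
    rw [Finset.sum_congr rfl fun i hi => by rw [natDegree_eq_of_degree_eq (hQ i hi)]] at hlt
    calc {x | expPoly (s.cons a ha) P μ x = 0}.encard
        = {x | expPoly (s.cons a ha) P ν x = 0}.encard := by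
          rw [zeros_expPoly_eq_zeros_expPoly_sub _ _ _ (μ a)]
      _ ≤ {x | expPoly s Q ν x = 0}.encard + d := by
          rw [← hderiv]
          exact encard_zeros_le_encard_zeros_iterate_deriv_add (contDiff_expPoly _ _ _) d
      _ < (∑ i ∈ s, (1 + (P i).natDegree) : ℕ) + d :=
          (ENat.add_lt_add_iff_right (ENat.natCast_ne_top d)).2 hlt
      _ = _ := by rw [Finset.sum_cons, add_comm d]; push_cast; rfl

/-- Pólya–Szegő bound: an exponential polynomial `x ↦ ∑ i, P i (x) * exp (μ i * x)`
with pairwise distinct `μ i` and nonzero polynomials `P i` has at most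
`(∑ i, (1 + deg (P i))) - 1` real roots. -/
theorem stmt_1 (n : ℕ) (hn : 0 < n) (P : Fin n → Polynomial ℝ) (μ : Fin n → ℝ)
    (hμ : Function.Injective μ) (hP : ∀ i, P i ≠ 0) :
    {x : ℝ | ∑ i, (P i).eval x * Real.exp (μ i * x) = 0}.encard
      ≤ ((∑ i, (1 + (P i).natDegree)) - 1 : ℕ) := by
  have hlt := encard_zeros_expPoly_lt (Finset.univ_nonempty_iff.2 ⟨⟨0, hn⟩⟩) hμ.injOn
    (fun i _ => hP i)
  rw [ENat.natCast_sub, Nat.cast_one]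
  exact ENat.le_sub_one_of_lt hlt
end

section
/- Let λ ∈ ℝ and φ_λ(v) = 1/(T(v) - λ v) where T : (-1,1) → ℝ is positive and ν is a probability measure on (-1,1), and suppose λ, μ are two 'eigenvalues', i.e., ∫ T(v)/(T(v)-λv) dν = 1 and ∫ T(v)/(T(v)-μv) dν = 1, with T(v) - λv ≠ 0 and T(v) - μv ≠ 0 ν-a.e. If λ ≠ μ, then ∫ v φ_λ(v) φ_μ(v) T(v) dν(v) = 0. -/
/-!
Subtracting the eigenvalue relations `∫ T φ_λ dν = 1` and `∫ T φ_μ dν = 1` gives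
`∫ T (φ_λ - φ_μ) dν = 0`, and pointwise `T φ_λ - T φ_μ = (λ - μ) v φ_λ φ_μ T`
(this is `(T - λv)φ_λ = 1` multiplied by `T φ_μ`, minus the same with `λ` and `μ` swapped).
Hence `(λ - μ) ∫ v φ_λ φ_μ T dν = 0`.
-/

open MeasureTheory

lemma div_sub_div_eq_sub_mul_resolvent {t v lam mu : ℝ}
    (hlam : t - lam * v ≠ 0) (hmu : t - mu * v ≠ 0) :
    t / (t - lam * v) - t / (t - mu * v)
      = (lam - mu) * (v * (1 / (t - lam * v)) * (1 / (t - mu * v)) * t) := by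
  rw [div_sub_div _ _ hlam hmu, eq_comm, eq_div_iff (mul_ne_zero hlam hmu)]
  field_simp
  ring

lemma integral_div_sub_div_eq_sub_mul_integral (ν : Measure ℝ) (T : ℝ → ℝ) {lam mu : ℝ}
    (hlam0 : ∀ᵐ v ∂ν, T v - lam * v ≠ 0) (hmu0 : ∀ᵐ v ∂ν, T v - mu * v ≠ 0) :
    ∫ v, (T v / (T v - lam * v) - T v / (T v - mu * v)) ∂ν
      = (lam - mu) * ∫ v, v * (1 / (T v - lam * v)) * (1 / (T v - mu * v)) * T v ∂ν := by
  rw [← integral_const_mul]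
  refine integral_congr_ae ?_
  filter_upwards [hlam0, hmu0] with v hlam hmu
  exact div_sub_div_eq_sub_mul_resolvent hlam hmu

theorem stmt_2_general (ν : Measure ℝ)
    (T : ℝ → ℝ) (lam mu : ℝ)
    (hlam0 : ∀ᵐ v ∂ν, T v - lam * v ≠ 0) (hmu0 : ∀ᵐ v ∂ν, T v - mu * v ≠ 0)
    (heig1 : ∫ v, T v / (T v - lam * v) ∂ν = 1)
    (heig2 : ∫ v, T v / (T v - mu * v) ∂ν = 1)
    (hne : lam ≠ mu) :
    ∫ v, v * (1 / (T v - lam * v)) * (1 / (T v - mu * v)) * T v ∂ν = 0 := by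
  have key := integral_div_sub_div_eq_sub_mul_integral ν T hlam0 hmu0
  rw [integral_sub (integrable_of_integral_eq_one heig1) (integrable_of_integral_eq_one heig2),
    heig1, heig2, sub_self, eq_comm] at key
  exact (mul_eq_zero.mp key).resolve_left (sub_ne_zero.mpr hne)

/-- Orthogonality of Case's eigenfunctions: if `λ ≠ μ` are two eigenvalues, i.e.
`∫ T/(T - λ v) dν = 1` and `∫ T/(T - μ v) dν = 1`, then
`∫ v φ_λ(v) φ_μ(v) T(v) dν(v) = 0` where `φ_λ(v) = 1/(T(v) - λ v)`. -/
theorem stmt_2 (ν : Measure ℝ) [IsProbabilityMeasure ν]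
    (hsupp : ν (Set.Ioo (-1 : ℝ) 1)ᶜ = 0)
    (T : ℝ → ℝ) (hT : ∀ᵐ v ∂ν, 0 < T v) (lam mu : ℝ)
    (hlam0 : ∀ᵐ v ∂ν, T v - lam * v ≠ 0) (hmu0 : ∀ᵐ v ∂ν, T v - mu * v ≠ 0)
    (hInt : Integrable (fun v => v * (1 / (T v - lam * v)) * (1 / (T v - mu * v)) * T v) ν)
    (heig1 : ∫ v, T v / (T v - lam * v) ∂ν = 1)
    (heig2 : ∫ v, T v / (T v - mu * v) ∂ν = 1)
    (hne : lam ≠ mu) :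
    ∫ v, v * (1 / (T v - lam * v)) * (1 / (T v - mu * v)) * T v ∂ν = 0 :=
  stmt_2_general ν T lam mu hlam0 hmu0 heig1 heig2 hne
end

section
/- Let 0 < λ_1 < λ_2 < ... < λ_{K-1} be positive reals and 0 < v_1 < v_2 < ... < v_K be positive reals with λ_i v_k ≠ 1 for all i,k. Then the K vectors (1,...,1), (1/(1-λ_1 v_k))_{k=1..K}, ..., (1/(1-λ_{K-1} v_k))_{k=1..K} form a basis of ℝ^K. -/
/-!
Clearing denominators in a relation `∑ i, g i / (1 - λ_i v) = 0` that holds at the `K` points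
`v = v_k` gives a polynomial of degree `< K` with `K` roots, hence the zero polynomial.
Evaluating it at `v = 1 / λ_i` kills every term but the `i`-th, so `g i = 0`; the one index
with `λ_i = 0` is then handled by evaluating at `v = 0`. Finally, `K` independent vectors
in `ℝ^K` span it.
-/

open Polynomial Finset

namespace CaseEigenfunctions

variable {F ι : Type*} [Field F] [Fintype ι]

section

variable [DecidableEq ι]

/-- The numerator of `∑ i, g i / (1 - a i X)` over the common denominator `∏ j, (1 - a j X)`. -/
noncomputable def sumInvNumerator (a g : ι → F) : F[X] :=
  ∑ i, C (g i) * ∏ j ∈ univ.erase i, (1 - C (a j) * X)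

lemma eval_sumInvNumerator (a g : ι → F) (x : F) :
    (sumInvNumerator a g).eval x = ∑ i, g i * ∏ j ∈ univ.erase i, (1 - a j * x) := by
  simp [sumInvNumerator, eval_finsetSum, eval_prod]

lemma natDegree_sumInvNumerator_le (a g : ι → F) :
    (sumInvNumerator a g).natDegree ≤ Fintype.card ι - 1 := by
  refine natDegree_sum_le_of_forall_le _ _ fun i _ => ?_
  refine natDegree_C_mul_le _ _ |>.trans <| natDegree_prod_le _ _ |>.trans ?_
  calc ∑ j ∈ univ.erase i, (1 - C (a j) * X).natDegree
      ≤ ∑ _j ∈ univ.erase i, 1 := by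
        gcongr with j
        simpa [sub_eq_neg_add] using natDegree_linear_le (a := -a j) (b := 1)
    _ = Fintype.card ι - 1 := by simp

lemma eval_sumInvNumerator_eq_prod_mul_sum {a : ι → F} (g : ι → F) {x : F}
    (hx : ∀ i, 1 - a i * x ≠ 0) :
    (sumInvNumerator a g).eval x = (∏ j, (1 - a j * x)) * ∑ i, g i / (1 - a i * x) := by
  rw [eval_sumInvNumerator, mul_sum]
  refine sum_congr rfl fun i _ => ?_
  rw [← mul_prod_erase univ _ (mem_univ i), mul_right_comm, mul_div_cancel₀ _ (hx i), mul_comm]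

lemma eval_sumInvNumerator_inv {a : ι → F} (g : ι → F) {i : ι} (hi : a i ≠ 0) :
    (sumInvNumerator a g).eval (a i)⁻¹ = g i * ∏ j ∈ univ.erase i, (1 - a j * (a i)⁻¹) := by
  rw [eval_sumInvNumerator, sum_eq_single i (fun i' _ hi' => ?_) (by simp)]
  exact mul_eq_zero_of_right _ <| prod_eq_zero (mem_erase.mpr ⟨Ne.symm hi', mem_univ i⟩)
    (by rw [mul_inv_cancel₀ hi, sub_self])

lemma eq_zero_of_sumInvNumerator_eq_zero {a g : ι → F} (ha : Function.Injective a)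
    (hP : sumInvNumerator a g = 0) (i : ι) : g i = 0 := by
  have of_ne_zero {i : ι} (hi : a i ≠ 0) : g i = 0 := by
    have h := eval_sumInvNumerator_inv g hi
    rw [hP, eval_zero, eq_comm] at h
    refine (mul_eq_zero.mp h).resolve_right <| prod_ne_zero_iff.mpr fun j hj h => ?_
    rw [sub_eq_zero, eq_comm, mul_inv_eq_one₀ hi] at h
    exact (mem_erase.mp hj).1 (ha h)
  by_cases hi : a i = 0
  · have h := congrArg (eval 0) hP
    rw [eval_sumInvNumerator, eval_zero, sum_eq_single i (fun j _ hj => ?_) (by simp)] at h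
    · simpa using h
    · rw [of_ne_zero fun h0 => hj (ha (h0.trans hi.symm)), zero_mul]
  · exact of_ne_zero hi

end

theorem linearIndependent_one_div_one_sub_mul {κ : Type*} [Fintype κ]
    {a : ι → F} {x : κ → F} (ha : Function.Injective a) (hx : Function.Injective x)
    (hcard : Fintype.card ι ≤ Fintype.card κ) (hne : ∀ i k, a i * x k ≠ 1) :
    LinearIndependent F fun i k => 1 / (1 - a i * x k) := by
  classical
  rw [Fintype.linearIndependent_iff]
  intro g hg i
  have hroots (k : κ) : (sumInvNumerator a g).eval (x k) = 0 := by
    refine (eval_sumInvNumerator_eq_prod_mul_sum g fun i => sub_ne_zero.mpr (hne i k).symm).trans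
      (mul_eq_zero_of_right _ ?_)
    simpa [div_eq_mul_inv] using congrFun hg k
  have hdeg : (sumInvNumerator a g).natDegree < Fintype.card κ := by
    have := natDegree_sumInvNumerator_le a g
    have := Fintype.card_pos_iff.mpr ⟨i⟩
    omega
  exact eq_zero_of_sumInvNumerator_eq_zero ha
    (eq_zero_of_natDegree_lt_card_of_eval_eq_zero _ hx hroots hdeg) i

end CaseEigenfunctions

theorem stmt_4_general (K : ℕ) (lam v : Fin K → ℝ)
    (hlam : StrictMono lam)
    (hv : StrictMono v)
    (hne : ∀ i k, lam i * v k ≠ 1) :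
    LinearIndependent ℝ (fun i k => 1 / (1 - lam i * v k) : Fin K → Fin K → ℝ) ∧
      Submodule.span ℝ
        (Set.range (fun i k => 1 / (1 - lam i * v k) : Fin K → Fin K → ℝ)) = ⊤ := by
  have hli := CaseEigenfunctions.linearIndependent_one_div_one_sub_mul
    hlam.injective hv.injective le_rfl hne
  exact ⟨hli, hli.span_eq_top_of_card_eq_finrank' (by simp)⟩

/-- For `0 = λ_0 < λ_1 < ... < λ_{K-1}` and `0 < v_1 < ... < v_K`, with `λ_i v_k ≠ 1`,
the `K` vectors `(1/(1 - λ_i v_k))_k` (the first of which, for `λ_0 = 0`, is the all-ones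
vector) form a basis of `ℝ^K`: they are linearly independent and span. -/
theorem stmt_4 (K : ℕ) (hK : 0 < K) (lam v : Fin K → ℝ)
    (hlam : StrictMono lam) (hlam0 : lam ⟨0, hK⟩ = 0)
    (hv : StrictMono v) (hvpos : ∀ k, 0 < v k)
    (hne : ∀ i k, lam i * v k ≠ 1) :
    LinearIndependent ℝ (fun i k => 1 / (1 - lam i * v k) : Fin K → Fin K → ℝ) ∧
      Submodule.span ℝ
        (Set.range (fun i k => 1 / (1 - lam i * v k) : Fin K → Fin K → ℝ)) = ⊤ :=
  stmt_4_general K lam v hlam hv hne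
end

section
/- Any nontrivial real linear combination a_0 + Σ_{i=1}^{K-1} a_i/(1-λ_i v), with 0 < λ_1 < ... < λ_{K-1}, has at most K-1 roots v in (0,+∞) \ {1/λ_1,...,1/λ_{K-1}}. -/
/-!
Multiplying `a₀ + ∑ aᵢ / (1 - λᵢ v)` by `∏ⱼ (1 - λⱼ v)` clears the denominators and gives a
polynomial of degree at most `m` that vanishes at every root avoiding the poles. It is not the
zero polynomial: at `v = 1/λᵢ` only the term `aᵢ ∏_{j ≠ i} (1 - λⱼ/λᵢ)` survives, and at `v = 0`
it equals `a₀`. A nonzero polynomial of degree at most `m` has at most `m` roots.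
-/

open Polynomial Finset

theorem Polynomial.encard_setOf_eval_eq_zero_le {R : Type*} [CommRing R] [IsDomain R]
    {p : R[X]} (hp : p ≠ 0) : {x | p.eval x = 0}.encard ≤ p.natDegree := by
  classical
  calc {x | p.eval x = 0}.encard = (p.roots.toFinset : Set R).encard := by
        congr 1; ext x; simp [mem_roots hp]
    _ = #p.roots.toFinset := Set.encard_coe_eq_coe_finsetCard _
    _ ≤ p.natDegree := by
        exact_mod_cast (Multiset.toFinset_card_le _).trans (card_roots' p)

section ClearedNumerator

variable {K ι : Type*} [Field K] [Fintype ι] [DecidableEq ι]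

/-- The numerator of `a₀ + ∑ᵢ aᵢ / (1 - λᵢ X)` over the common denominator `∏ⱼ (1 - λⱼ X)`. -/
noncomputable def clearedNumerator (a₀ : K) (a lam : ι → K) : K[X] :=
  C a₀ * ∏ j, (1 - C (lam j) * X) + ∑ i, C (a i) * ∏ j ∈ univ.erase i, (1 - C (lam j) * X)

theorem eval_clearedNumerator (a₀ : K) (a lam : ι → K) (v : K) :
    (clearedNumerator a₀ a lam).eval v =
      a₀ * ∏ j, (1 - lam j * v) + ∑ i, a i * ∏ j ∈ univ.erase i, (1 - lam j * v) := by
  simp [clearedNumerator, eval_prod, eval_finsetSum]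

theorem eval_clearedNumerator_eq_prod_mul {a₀ : K} {a lam : ι → K} {v : K}
    (hv : ∀ i, 1 - lam i * v ≠ 0) :
    (clearedNumerator a₀ a lam).eval v =
      (∏ j, (1 - lam j * v)) * (a₀ + ∑ i, a i / (1 - lam i * v)) := by
  have hterm : ∀ i, a i * ∏ j ∈ univ.erase i, (1 - lam j * v) =
      (∏ j, (1 - lam j * v)) * (a i / (1 - lam i * v)) := fun i => by
    rw [← mul_prod_erase univ _ (mem_univ i), eq_comm, mul_comm, div_mul_eq_mul_div,
      div_eq_iff (hv i)]
    ring
  rw [eval_clearedNumerator, sum_congr rfl fun i _ => hterm i, ← mul_sum]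
  ring

theorem natDegree_clearedNumerator_le (a₀ : K) (a lam : ι → K) :
    (clearedNumerator a₀ a lam).natDegree ≤ Fintype.card ι := by
  have hprod : ∀ s : Finset ι, (∏ j ∈ s, (1 - C (lam j) * X)).natDegree ≤ Fintype.card ι :=
    fun s => calc
      _ ≤ ∑ j ∈ s, (1 - C (lam j) * X).natDegree := natDegree_prod_le _ _
      _ ≤ #s • 1 := sum_le_card_nsmul _ _ _ fun j _ =>
          (natDegree_sub_le _ _).trans <|
            max_le (by simp) ((natDegree_C_mul_le _ _).trans natDegree_X_le)
      _ ≤ Fintype.card ι := by simpa using card_le_univ s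
  refine (natDegree_add_le _ _).trans (max_le ?_ ?_)
  · exact (natDegree_C_mul_le _ _).trans (hprod _)
  · exact natDegree_sum_le_of_forall_le _ _ fun i _ => (natDegree_C_mul_le _ _).trans (hprod _)

theorem clearedNumerator_ne_zero {a₀ : K} {a lam : ι → K} (hlam : Function.Injective lam)
    (hlam₀ : ∀ i, lam i ≠ 0) (ha : ¬(a₀ = 0 ∧ a = 0)) : clearedNumerator a₀ a lam ≠ 0 := by
  intro h
  by_cases hai : ∃ i, a i ≠ 0
  · obtain ⟨i, hi⟩ := hai
    have hvanish : ∀ k, k ≠ i → ∏ j ∈ univ.erase k, (1 - lam j * (lam i)⁻¹) = 0 := fun k hk =>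
      prod_eq_zero (mem_erase.2 ⟨hk.symm, mem_univ i⟩) (by field_simp [hlam₀ i]; ring)
    have hrest : ∏ j ∈ univ.erase i, (1 - lam j * (lam i)⁻¹) ≠ 0 :=
      prod_ne_zero_iff.2 fun j hj => by
        rw [sub_ne_zero, ne_comm, ← div_eq_mul_inv, ne_eq, div_eq_one_iff_eq (hlam₀ i)]
        exact hlam.ne (mem_erase.1 hj).1
    have := congrArg (eval (lam i)⁻¹) h
    rw [eval_clearedNumerator, prod_eq_zero (mem_univ i) (by field_simp [hlam₀ i]; ring),
      sum_eq_single i (fun k _ hk => by rw [hvanish k hk, mul_zero]) (by simp)] at this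
    simp only [mul_zero, zero_add, eval_zero] at this
    exact mul_ne_zero hi hrest this
  · have ha' : a = 0 := funext fun i => by_contra fun hi => hai ⟨i, hi⟩
    exact ha ⟨by simpa [eval_clearedNumerator, ha'] using congrArg (eval 0) h, ha'⟩

end ClearedNumerator

/-- Any nontrivial linear combination `a_0 + ∑_{i=1}^{m} a_i / (1 - λ_i v)`, with
`0 < λ_1 < ... < λ_m`, has at most `m` roots `v` in `(0, +∞) \ {1/λ_1, ..., 1/λ_m}`
(for `m = K - 1` functions plus the constant, this is the "at most `K - 1` roots" bound). -/
theorem stmt_6 (m : ℕ) (lam : Fin m → ℝ) (hlam : StrictMono lam)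
    (hpos : ∀ i, 0 < lam i) (a0 : ℝ) (a : Fin m → ℝ)
    (hnontriv : ¬(a0 = 0 ∧ a = 0)) :
    {v : ℝ | 0 < v ∧ (∀ i, lam i * v ≠ 1) ∧
        a0 + ∑ i, a i / (1 - lam i * v) = 0}.encard ≤ (m : ℕ∞) := by
  have hP := clearedNumerator_ne_zero hlam.injective (fun i => (hpos i).ne') hnontriv
  calc _ ≤ {v | (clearedNumerator a0 a lam).eval v = 0}.encard := by
        refine Set.encard_le_encard fun v ⟨_, hpole, hroot⟩ => ?_
        have hv : ∀ i, 1 - lam i * v ≠ 0 := fun i => sub_ne_zero.2 (hpole i).symm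
        simp [eval_clearedNumerator_eq_prod_mul hv, hroot]
    _ ≤ (clearedNumerator a0 a lam).natDegree := encard_setOf_eval_eq_zero_le hP
    _ ≤ m := by
        exact_mod_cast (natDegree_clearedNumerator_le a0 a lam).trans_eq (Fintype.card_fin m)
end

section
/- Let 0 < λ_1 < ... < λ_{K-1}, 0 < μ_1 < ... < μ_{K-1}, and 0 < v_1 < ... < v_K, with all λ_i v_k ≠ 1 and μ_j v_k ≠ 1. If real numbers a_0,...,a_{K-1}, b_0,...,b_{K-1} satisfy, for all k = 1,...,K, both (a_0-b_0) + Σ_ℓ (a_ℓ/(1-λ_ℓ v_k) - b_ℓ/(1+μ_ℓ v_k)) = 0 and (a_0-b_0) + Σ_ℓ (a_ℓ/(1+λ_ℓ v_k) - b_ℓ/(1-μ_ℓ v_k)) = 0, then a_0 = b_0 and a_ℓ = b_ℓ = 0 for ℓ = 1,...,K-1. -/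
/-!
Put `r = (λ, -μ)` and `d = (a, -b)`, so both families of equations say that
`f(x) = (a₀ - b₀) + ∑ i, d i / (1 - r i x)` vanishes at the `2K` distinct points `±v_k`.
Clearing denominators, `f(x) ∏ (1 - r i x)` is a polynomial of degree at most `2(K - 1)`,
hence zero. Its value `d i ∏_{j ≠ i} (1 - r j / r i)` at the pole `1 / r i` then forces
`d i = 0`, as the `r i` are distinct, and its value `(a₀ - b₀) + ∑ d i` at `0` gives
`a₀ = b₀`.
-/
open Polynomial Finset

namespace PartialFraction

theorem natDegree_one_sub_C_mul_X_le {R : Type*} [CommRing R] (a : R) :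
    (1 - C a * X).natDegree ≤ 1 := by
  compute_degree

theorem natDegree_prod_one_sub_C_mul_X_le {R ι : Type*} [CommRing R] (r : ι → R)
    (s : Finset ι) :
    (∏ i ∈ s, (1 - C (r i) * X)).natDegree ≤ s.card := by
  refine (natDegree_prod_le _ _).trans ?_
  rw [card_eq_sum_ones]
  exact sum_le_sum fun i _ => natDegree_one_sub_C_mul_X_le (r i)

variable {F ι : Type*} [Field F] [Fintype ι] [DecidableEq ι]

/-- `c + ∑ i, d i / (1 - r i * X)` multiplied by `∏ i, (1 - r i * X)`. -/
noncomputable def numerator (c : F) (r d : ι → F) : F[X] :=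
  C c * ∏ i, (1 - C (r i) * X) + ∑ i, C (d i) * ∏ j ∈ univ.erase i, (1 - C (r j) * X)

variable (c : F) (r d : ι → F)

theorem natDegree_numerator_le : (numerator c r d).natDegree ≤ Fintype.card ι := by
  unfold numerator
  refine (natDegree_add_le _ _).trans (max_le ?_ (natDegree_sum_le_of_forall_le _ _ fun i _ => ?_))
  · exact natDegree_C_mul_le _ _ |>.trans (natDegree_prod_one_sub_C_mul_X_le r _)
  · exact natDegree_C_mul_le _ _ |>.trans <|
      (natDegree_prod_one_sub_C_mul_X_le r _).trans (card_le_univ _)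

theorem eval_numerator (x : F) :
    (numerator c r d).eval x =
      c * ∏ i, (1 - r i * x) + ∑ i, d i * ∏ j ∈ univ.erase i, (1 - r j * x) := by
  simp [numerator, eval_prod, eval_finsetSum]

theorem eval_numerator_eq_mul_prod {x : F} (hx : ∀ i, 1 - r i * x ≠ 0) :
    (numerator c r d).eval x = (c + ∑ i, d i / (1 - r i * x)) * ∏ i, (1 - r i * x) := by
  rw [eval_numerator, add_mul, sum_mul]
  congr 1
  refine sum_congr rfl fun i _ => ?_
  rw [← mul_prod_erase univ _ (mem_univ i), ← mul_assoc, div_mul_cancel₀ _ (hx i)]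

theorem eval_numerator_zero : (numerator c r d).eval 0 = c + ∑ i, d i := by
  simp [eval_numerator]

theorem eval_numerator_inv {i : ι} (hri : r i ≠ 0) :
    (numerator c r d).eval (r i)⁻¹ = d i * ∏ j ∈ univ.erase i, (1 - r j * (r i)⁻¹) := by
  have hvanish : 1 - r i * (r i)⁻¹ = 0 := by rw [mul_inv_cancel₀ hri, sub_self]
  rw [eval_numerator, prod_eq_zero (mem_univ i) hvanish, mul_zero, zero_add]
  refine sum_eq_single i (fun j _ hji => ?_) (by simp)
  rw [prod_eq_zero (mem_erase.2 ⟨hji.symm, mem_univ i⟩) hvanish, mul_zero]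

theorem eq_zero_of_sum_div_one_sub_eq_zero {κ : Type*} [Fintype κ] (hr : Function.Injective r)
    (hr0 : ∀ i, r i ≠ 0) {x : κ → F} (hx : Function.Injective x)
    (hcard : Fintype.card ι < Fintype.card κ) (hpole : ∀ k i, 1 - r i * x k ≠ 0)
    (hzero : ∀ k, c + ∑ i, d i / (1 - r i * x k) = 0) :
    c = 0 ∧ ∀ i, d i = 0 := by
  have hnum : numerator c r d = 0 :=
    eq_zero_of_natDegree_lt_card_of_eval_eq_zero _ hx
      (fun k => by rw [eval_numerator_eq_mul_prod c r d (hpole k), hzero k, zero_mul])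
      ((natDegree_numerator_le c r d).trans_lt hcard)
  have hd : ∀ i, d i = 0 := fun i => by
    have h := eval_numerator_inv c r d (hr0 i)
    rw [hnum, eval_zero, eq_comm, mul_eq_zero] at h
    refine h.resolve_right (prod_ne_zero_iff.2 fun j hj => ?_)
    rw [sub_ne_zero, ne_comm, ← div_eq_mul_inv, ne_eq, div_eq_one_iff_eq (hr0 i)]
    exact hr.ne (mem_erase.1 hj).1
  refine ⟨?_, hd⟩
  simpa [hnum, hd] using (eval_numerator_zero c r d).symm

end PartialFraction

theorem sum_sumElim_div_one_sub {F κ : Type*} [Field F] [Fintype κ] (lam mu a b : κ → F)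
    (y : F) :
    ∑ i, Sum.elim a (-b) i / (1 - Sum.elim lam (-mu) i * y) =
      ∑ ℓ, (a ℓ / (1 - lam ℓ * y) - b ℓ / (1 + mu ℓ * y)) := by
  rw [Fintype.sum_sum_type, sum_sub_distrib]
  simp [neg_div, sub_eq_add_neg]

/-- Kernel identification step: if the two families of equations at `±v_k` hold for all
`k = 1, ..., K`, then `a_0 = b_0` and all other coefficients vanish. -/
theorem stmt_7 (K : ℕ) (hK : 0 < K)
    (lam mu : Fin (K - 1) → ℝ) (v : Fin K → ℝ)
    (hlam : StrictMono lam) (hlampos : ∀ ℓ, 0 < lam ℓ)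
    (hmu : StrictMono mu) (hmupos : ∀ ℓ, 0 < mu ℓ)
    (hv : StrictMono v) (hvpos : ∀ k, 0 < v k)
    (hlamne : ∀ ℓ k, lam ℓ * v k ≠ 1) (hmune : ∀ ℓ k, mu ℓ * v k ≠ 1)
    (a0 b0 : ℝ) (a b : Fin (K - 1) → ℝ)
    (h1 : ∀ k, (a0 - b0) +
        ∑ ℓ, (a ℓ / (1 - lam ℓ * v k) - b ℓ / (1 + mu ℓ * v k)) = 0)
    (h2 : ∀ k, (a0 - b0) +
        ∑ ℓ, (a ℓ / (1 + lam ℓ * v k) - b ℓ / (1 - mu ℓ * v k)) = 0) :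
    a0 = b0 ∧ (∀ ℓ, a ℓ = 0) ∧ ∀ ℓ, b ℓ = 0 := by
  have hr : Function.Injective (Sum.elim lam (-mu)) :=
    hlam.injective.sumElim (neg_injective.comp hmu.injective) fun i j =>
      ((neg_neg_of_pos (hmupos j)).trans (hlampos i)).ne'
  have hr0 : ∀ i, Sum.elim lam (-mu) i ≠ 0 := by
    rintro (i | i) <;> simp [(hlampos i).ne', (hmupos i).ne']
  have hx : Function.Injective (Sum.elim v (-v)) :=
    hv.injective.sumElim (neg_injective.comp hv.injective) fun i j =>
      ((neg_neg_of_pos (hvpos j)).trans (hvpos i)).ne'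
  have hcard : Fintype.card (Fin (K - 1) ⊕ Fin (K - 1)) < Fintype.card (Fin K ⊕ Fin K) := by
    simp only [Fintype.card_sum, Fintype.card_fin]
    omega
  have hpole : ∀ k i, 1 - Sum.elim lam (-mu) i * Sum.elim v (-v) k ≠ 0 := by
    rintro (k | k) (i | i) <;> simp only [Sum.elim_inl, Sum.elim_inr, Pi.neg_apply]
    · exact sub_ne_zero.2 (hlamne i k).symm
    · nlinarith [mul_pos (hmupos i) (hvpos k)]
    · nlinarith [mul_pos (hlampos i) (hvpos k)]
    · rw [neg_mul_neg]
      exact sub_ne_zero.2 (hmune i k).symm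
  have hzero : ∀ k, (a0 - b0) +
      ∑ i, Sum.elim a (-b) i / (1 - Sum.elim lam (-mu) i * Sum.elim v (-v) k) = 0 := by
    rintro (k | k)
    · rw [Sum.elim_inl, sum_sumElim_div_one_sub]
      exact h1 k
    · rw [Sum.elim_inr, sum_sumElim_div_one_sub]
      simpa only [Pi.neg_apply, mul_neg, sub_neg_eq_add, ← sub_eq_add_neg] using h2 k
  obtain ⟨hc, hd⟩ :=
    PartialFraction.eq_zero_of_sum_div_one_sub_eq_zero _ _ _ hr hr0 hx hcard hpole hzero
  exact ⟨sub_eq_zero.1 hc, fun ℓ => hd (.inl ℓ), fun ℓ => neg_eq_zero.1 (hd (.inr ℓ))⟩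
end

section
/- Let R_0 = (Δt/Δx) V [[I_K, ζγ - I_K],[ζγ - I_K, I_K]] where V = diag(v_1,...,v_K,v_1,...,v_K) with v_k > 0, ζ_{kℓ} = 1/(1-v_k λ_ℓ) - 1/(1+v_k λ_ℓ) and γ satisfies γ·(1/(1-V⊗λ)) = I_{K-1} and γ·1 = 0, with 0 < λ_1 < ... < λ_{K-1} and 0 < v_1 < ... < v_K, λ_ℓ v_k ≠ 1. Then Ker(R_0) = span{1_{ℝ^{2K}}}. -/
/-!
Put `M = (1 / (1 - v_k λ_ℓ))`, `N = (1 / (1 + v_k λ_ℓ))` and `ζ = M - N`. Then `R_0` is a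
nonsingular diagonal matrix times `[[I, P - I], [P - I, I]]` with `P = ζγ`, and `(u, w)` lies in
its kernel iff `P (u + w) = 0` and `P (u - w) = 2 (u - w)`.

Since `γ M = I`, `γ` is onto, so by rank–nullity and `γ 𝟙 = 0`, `ker γ = span 𝟙`. If `ζ` is
injective, the first condition says `u + w ∈ span 𝟙`. For the second, `c = γ (u - w)` satisfies
`2c = γ ζ c = c - γ N c`, so `γ (M + N) c = 0` and `(M + N) c ∈ span 𝟙`; we then need
`c = 0`, which gives `u = w`.

Both facts, injectivity of `ζ` and `(M + N) c ∈ span 𝟙 → c = 0`, come from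
`1/(1 - x) ∓ 1/(1 + x) = (2x or 2)/(1 - x²)`, which turns each row into a sum
`∑_ℓ d_ℓ / (v_k² - λ_ℓ⁻²)`. Such a sum cannot be constant at the `K` distinct points `v_k²`
unless `d = 0`: clearing denominators in `∑_ℓ d_ℓ / (X - λ_ℓ⁻²) - t` gives a polynomial of
degree `≤ K - 1` vanishing at those points, and its values at the poles `λ_ℓ⁻²` are the `d_ℓ` up
to nonzero factors.
-/

open Matrix Function

open Polynomial Lagrange Finset in
theorem eq_zero_of_sum_div_sub_eq_const {F ι κ : Type*} [Field F] [Fintype ι] [Fintype κ]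
    [DecidableEq κ] {x : ι → F} {b : κ → F} (hx : Injective x) (hb : Injective b)
    (hxb : ∀ k ℓ, x k ≠ b ℓ) (hcard : Fintype.card κ < Fintype.card ι) {d : κ → F} {t : F}
    (h : ∀ k, ∑ ℓ, d ℓ / (x k - b ℓ) = t) : d = 0 := by
  have hw : ∀ ℓ, nodalWeight univ b ℓ ≠ 0 := fun ℓ => nodalWeight_ne_zero hb.injOn (mem_univ ℓ)
  set r : κ → F := fun ℓ => d ℓ / nodalWeight univ b ℓ
  have key : interpolate univ b r = t • nodal univ b := by
    refine eq_of_degree_sub_lt_of_eval_index_eq univ hx.injOn ?_ fun k _ => ?_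
    · refine (degree_sub_le _ _).trans_lt (max_lt ?_ ?_)
      · exact (degree_interpolate_lt r hb.injOn).trans (by exact_mod_cast hcard)
      · refine (degree_smul_le _ _).trans_lt ?_
        rw [degree_nodal]
        exact_mod_cast hcard
    · rw [eval_interpolate_not_at_node r fun ℓ _ => hxb k ℓ, eval_smul, smul_eq_mul, ← h k,
        mul_comm]
      congr 1
      refine sum_congr rfl fun ℓ _ => ?_
      simp only [r]
      field_simp [hw ℓ]
  funext ℓ
  have hr := congrArg (Polynomial.eval (b ℓ)) key
  rw [eval_interpolate_at_node r hb.injOn (mem_univ ℓ), eval_smul,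
    eval_nodal_at_node (mem_univ ℓ), smul_zero] at hr
  simpa [r, hw ℓ] using hr

theorem eq_zero_of_sum_div_one_sub_mul_sq_eq_const {F ι κ : Type*} [Field F] [Fintype ι]
    [Fintype κ] [DecidableEq κ] {v : ι → F} {lam : κ → F} (hv : Injective fun k => v k ^ 2)
    (hlam : Injective fun ℓ => lam ℓ ^ 2) (hlam0 : ∀ ℓ, lam ℓ ≠ 0)
    (hne : ∀ k ℓ, (v k * lam ℓ) ^ 2 ≠ 1) (hcard : Fintype.card κ < Fintype.card ι)
    {e : κ → F} {t : F} (h : ∀ k, ∑ ℓ, e ℓ / (1 - (v k * lam ℓ) ^ 2) = t) : e = 0 := by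
  have hsub : ∀ k ℓ, v k ^ 2 - (lam ℓ ^ 2)⁻¹ = -(1 - (v k * lam ℓ) ^ 2) / lam ℓ ^ 2 := by
    intro k ℓ
    field_simp [hlam0 ℓ]
    ring
  have hd : (fun ℓ => -e ℓ / lam ℓ ^ 2) = 0 := by
    refine eq_zero_of_sum_div_sub_eq_const (b := fun ℓ => (lam ℓ ^ 2)⁻¹) (t := t) hv
      (inv_injective.comp hlam) (fun k ℓ hkℓ => hne k ℓ ?_) hcard fun k => ?_
    · rw [mul_pow, hkℓ, inv_mul_cancel₀ (pow_ne_zero 2 (hlam0 ℓ))]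
    · rw [← h k]
      refine Finset.sum_congr rfl fun ℓ _ => ?_
      have := sub_ne_zero.2 (hne k ℓ).symm
      rw [hsub]
      field_simp [hlam0 ℓ]
  funext ℓ
  simpa [hlam0 ℓ] using congrFun hd ℓ

theorem one_div_one_sub_add_one_div_one_add {F : Type*} [Field F] {x : F} (hx : x ^ 2 ≠ 1) :
    1 / (1 - x) + 1 / (1 + x) = 2 / (1 - x ^ 2) := by
  have h₁ : 1 - x ≠ 0 := fun h => hx (by rw [← sub_eq_zero.1 h, one_pow])
  have h₂ : 1 + x ≠ 0 := fun h => hx (by rw [eq_neg_of_add_eq_zero_right h, neg_one_sq])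
  field_simp
  ring

theorem one_div_one_sub_sub_one_div_one_add {F : Type*} [Field F] {x : F} (hx : x ^ 2 ≠ 1) :
    1 / (1 - x) - 1 / (1 + x) = 2 * x / (1 - x ^ 2) := by
  have h₁ : 1 - x ≠ 0 := fun h => hx (by rw [← sub_eq_zero.1 h, one_pow])
  have h₂ : 1 + x ≠ 0 := fun h => hx (by rw [eq_neg_of_add_eq_zero_right h, neg_one_sq])
  field_simp
  ring

theorem Matrix.ker_toLin'_eq_span_one_of_mul_eq_one {F ι κ : Type*} [Field F] [Fintype ι]
    [Fintype κ] [DecidableEq ι] [DecidableEq κ] {γ : Matrix κ ι F} {M : Matrix ι κ F}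
    (hγM : γ * M = 1) (hγ1 : γ *ᵥ (fun _ => 1) = 0)
    (hcard : Fintype.card κ + 1 = Fintype.card ι) :
    LinearMap.ker (toLin' γ) = Submodule.span F {fun _ => 1} := by
  have hsurj : Surjective (toLin' γ) := fun z =>
    ⟨M *ᵥ z, by rw [toLin'_apply, mulVec_mulVec, hγM, one_mulVec]⟩
  have hker : Module.finrank F (LinearMap.ker (toLin' γ)) = 1 := by
    have := LinearMap.finrank_range_add_finrank_ker (toLin' γ)
    rw [LinearMap.range_eq_top.2 hsurj, finrank_top] at this
    simp only [Module.finrank_fintype_fun_eq_card] at this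
    omega
  have hone : (fun _ => 1 : ι → F) ≠ 0 := by
    obtain ⟨i⟩ : Nonempty ι := Fintype.card_pos_iff.1 (by omega)
    exact ne_iff.2 ⟨i, one_ne_zero⟩
  refine (Submodule.eq_of_le_of_finrank_eq ?_ ?_).symm
  · rw [Submodule.span_singleton_le_iff_mem, LinearMap.mem_ker, toLin'_apply, hγ1]
  · rw [finrank_span_singleton hone, hker]

theorem Matrix.ker_toLin'_smul_diagonal_mul {F m n : Type*} [Field F] [Fintype m] [Fintype n]
    [DecidableEq m] [DecidableEq n] {c : F} {d : m → F} (hc : c ≠ 0) (hd : ∀ i, d i ≠ 0)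
    (B : Matrix m n F) :
    LinearMap.ker (toLin' (c • (diagonal d * B))) = LinearMap.ker (toLin' B) := by
  ext x
  simp only [LinearMap.mem_ker, toLin'_apply, smul_mulVec, ← mulVec_mulVec, smul_eq_zero, hc,
    false_or, mulVec_diagonal, funext_iff, Pi.zero_apply, mul_eq_zero, hd]

theorem Matrix.ker_toLin'_fromBlocks_one_sub_one {𝕜 ι : Type*} [Field 𝕜] [NeZero (2 : 𝕜)]
    [Fintype ι] [DecidableEq ι] {P : Matrix ι ι 𝕜}
    (hP : LinearMap.ker (toLin' P) = Submodule.span 𝕜 {fun _ => 1})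
    (hP2 : ∀ d, P *ᵥ d = (2 : 𝕜) • d → d = 0) :
    LinearMap.ker (toLin' (fromBlocks 1 (P - 1) (P - 1) 1)) = Submodule.span 𝕜 {fun _ => 1} := by
  have hP' : ∀ y, P *ᵥ y = 0 ↔ ∃ r : 𝕜, r • (fun _ => 1) = y := fun y => by
    rw [← Submodule.mem_span_singleton, ← hP, LinearMap.mem_ker, toLin'_apply]
  ext x
  obtain ⟨u, w, rfl⟩ : ∃ u w, x = Sum.elim u w := ⟨_, _, (Sum.elim_comp_inl_inr x).symm⟩
  rw [LinearMap.mem_ker, toLin'_apply, Submodule.mem_span_singleton, fromBlocks_mulVec,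
    ← Sum.elim_zero_zero, Sum.elim_eq_iff]
  simp only [Sum.elim_comp_inl, Sum.elim_comp_inr, sub_mulVec, one_mulVec]
  constructor
  · rintro ⟨h1, h2⟩
    obtain ⟨r, hr⟩ := (hP' (u + w)).1 <| by
      rw [mulVec_add]
      linear_combination (norm := module) h1 + h2
    obtain rfl : u = w := sub_eq_zero.1 <| hP2 _ <| by
      rw [mulVec_sub]
      linear_combination (norm := module) h2 - h1
    have hu : u = (r / 2) • fun _ => 1 := by
      rw [div_eq_inv_mul, mul_smul, hr, ← two_smul 𝕜 u, smul_smul, inv_mul_cancel₀ two_ne_zero,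
        one_smul]
    refine ⟨r / 2, funext fun i => ?_⟩
    rcases i with i | i <;> rw [hu] <;> rfl
  · rintro ⟨a, ha⟩
    obtain rfl : u = a • fun _ => 1 := funext fun i => by simpa using (congrFun ha (.inl i)).symm
    obtain rfl : w = a • fun _ => 1 := funext fun i => by simpa using (congrFun ha (.inr i)).symm
    simp [(hP' _).2 ⟨a, rfl⟩]

theorem ker_toLin'_of_sub_of_eq_bot {F ι κ : Type*} [Field F] [NeZero (2 : F)] [Fintype ι]
    [Fintype κ] [DecidableEq κ] {v : ι → F} {lam : κ → F} (hv : Injective fun k => v k ^ 2)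
    (hv0 : ∀ k, v k ≠ 0) (hlam : Injective fun ℓ => lam ℓ ^ 2) (hlam0 : ∀ ℓ, lam ℓ ≠ 0)
    (hne : ∀ k ℓ, (v k * lam ℓ) ^ 2 ≠ 1) (hcard : Fintype.card κ < Fintype.card ι) :
    LinearMap.ker (toLin' (of (fun k ℓ => 1 / (1 - v k * lam ℓ)) -
      of (fun k ℓ => 1 / (1 + v k * lam ℓ)))) = ⊥ := by
  refine LinearMap.ker_eq_bot'.2 fun c hc => ?_
  have he := eq_zero_of_sum_div_one_sub_mul_sq_eq_const hv hlam hlam0 hne hcard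
    (e := fun ℓ => 2 * lam ℓ * c ℓ) (t := 0) fun k => by
      have hk := congrFun hc k
      simp only [toLin'_apply, mulVec, dotProduct, Matrix.sub_apply, of_apply, Pi.zero_apply,
        one_div_one_sub_sub_one_div_one_add (hne _ _)] at hk
      rw [← mul_right_inj' (hv0 k), mul_zero, Finset.mul_sum, ← hk]
      exact Finset.sum_congr rfl fun ℓ _ => by ring
  funext ℓ
  simpa [hlam0 ℓ, two_ne_zero] using congrFun he ℓ

theorem eq_zero_of_of_add_of_mulVec_mem_span_one {F ι κ : Type*} [Field F] [NeZero (2 : F)]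
    [Fintype ι] [Fintype κ] [DecidableEq κ] {v : ι → F} {lam : κ → F}
    (hv : Injective fun k => v k ^ 2) (hlam : Injective fun ℓ => lam ℓ ^ 2)
    (hlam0 : ∀ ℓ, lam ℓ ≠ 0) (hne : ∀ k ℓ, (v k * lam ℓ) ^ 2 ≠ 1)
    (hcard : Fintype.card κ < Fintype.card ι) {c : κ → F}
    (hc : (of (fun k ℓ => 1 / (1 - v k * lam ℓ)) + of (fun k ℓ => 1 / (1 + v k * lam ℓ))) *ᵥ c ∈
      Submodule.span F {fun _ => 1}) : c = 0 := by
  obtain ⟨t, ht⟩ := Submodule.mem_span_singleton.1 hc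
  have he := eq_zero_of_sum_div_one_sub_mul_sq_eq_const hv hlam hlam0 hne hcard
    (e := fun ℓ => 2 * c ℓ) (t := t) fun k => by
      have hk := congrFun ht k
      simp only [mulVec, dotProduct, Matrix.add_apply, of_apply, Pi.smul_apply, smul_eq_mul,
        mul_one, one_div_one_sub_add_one_div_one_add (hne _ _)] at hk
      rw [hk]
      exact Finset.sum_congr rfl fun ℓ _ => by ring
  funext ℓ
  simpa [two_ne_zero] using congrFun he ℓ

theorem eq_zero_of_sub_mul_mulVec_eq_two_smul {F ι κ : Type*} [Field F] [NeZero (2 : F)]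
    [Fintype ι] [Fintype κ] [DecidableEq κ] {γ : Matrix κ ι F} {M N : Matrix ι κ F}
    (hγM : γ * M = 1) (hMN : ∀ c, γ *ᵥ ((M + N) *ᵥ c) = 0 → c = 0) {d : ι → F}
    (hd : ((M - N) * γ) *ᵥ d = (2 : F) • d) : d = 0 := by
  set c := γ *ᵥ d
  have hZc : (M - N) *ᵥ c = (2 : F) • d := by rw [mulVec_mulVec]; exact hd
  have hMc : γ *ᵥ (M *ᵥ c) = c := by rw [mulVec_mulVec, hγM, one_mulVec]
  have hc : c = 0 := hMN c <| by
    have h2 := congrArg (γ *ᵥ ·) hZc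
    simp only [sub_mulVec, mulVec_sub, hMc, mulVec_smul] at h2
    rw [add_mulVec, mulVec_add, hMc]
    linear_combination (norm := module) -h2
  have h2d : (2 : F) • d = 0 := by rw [← hZc, hc, mulVec_zero]
  exact (smul_eq_zero.1 h2d).resolve_left two_ne_zero

/-- For the gray radiative transfer limit matrix
`R_0 = (Δt/Δx) V [[I, ζγ - I], [ζγ - I, I]]`, with `V = diag(v, v)`,
`ζ_{kℓ} = 1/(1 - v_k λ_ℓ) - 1/(1 + v_k λ_ℓ)`, and `γ` satisfying
`γ (1/(1 - V⊗λ)) = I` and `γ 𝟙 = 0`, the kernel of `R_0` is spanned by the all-ones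
vector of `ℝ^{2K}`. -/
theorem stmt_9 (K : ℕ) (hK : 0 < K) (lam : Fin (K - 1) → ℝ) (v : Fin K → ℝ)
    (Δt Δx : ℝ) (hΔt : 0 < Δt) (hΔx : 0 < Δx)
    (hlam : StrictMono lam) (hlampos : ∀ ℓ, 0 < lam ℓ)
    (hv : StrictMono v) (hvpos : ∀ k, 0 < v k)
    (hne : ∀ ℓ k, lam ℓ * v k ≠ 1)
    (γ : Matrix (Fin (K - 1)) (Fin K) ℝ)
    (hγ1 : γ * Matrix.of (fun k ℓ => 1 / (1 - v k * lam ℓ)) = 1)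
    (hγ2 : γ.mulVec (fun _ => 1) = 0) :
    LinearMap.ker (Matrix.toLin'
        ((Δt / Δx) • (Matrix.diagonal (Sum.elim v v) *
          Matrix.fromBlocks 1
            (Matrix.of (fun k ℓ => 1 / (1 - v k * lam ℓ) - 1 / (1 + v k * lam ℓ)) * γ - 1)
            (Matrix.of (fun k ℓ => 1 / (1 - v k * lam ℓ) - 1 / (1 + v k * lam ℓ)) * γ - 1)
            1))) =
      Submodule.span ℝ {fun _ => (1 : ℝ)} := by
  set M : Matrix (Fin K) (Fin (K - 1)) ℝ := of fun k ℓ => 1 / (1 - v k * lam ℓ)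
  set N : Matrix (Fin K) (Fin (K - 1)) ℝ := of fun k ℓ => 1 / (1 + v k * lam ℓ)
  have hζ : (of fun k ℓ => 1 / (1 - v k * lam ℓ) - 1 / (1 + v k * lam ℓ)) = M - N := rfl
  have hcard : Fintype.card (Fin (K - 1)) + 1 = Fintype.card (Fin K) := by
    simp only [Fintype.card_fin]
    omega
  have hv2 : Injective fun k => v k ^ 2 := fun i j h =>
    hv.injective ((sq_eq_sq₀ (hvpos i).le (hvpos j).le).1 h)
  have hlam2 : Injective fun ℓ => lam ℓ ^ 2 := fun i j h =>
    hlam.injective ((sq_eq_sq₀ (hlampos i).le (hlampos j).le).1 h)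
  have hne2 : ∀ k ℓ, (v k * lam ℓ) ^ 2 ≠ 1 := fun k ℓ h => hne ℓ k <| by
    rw [mul_comm]
    exact (pow_eq_one_iff_of_nonneg (mul_pos (hvpos k) (hlampos ℓ)).le two_ne_zero).1 h
  have hγker := ker_toLin'_eq_span_one_of_mul_eq_one hγ1 hγ2 hcard
  have hζker : LinearMap.ker (toLin' (M - N)) = ⊥ := ker_toLin'_of_sub_of_eq_bot hv2
    (fun k => (hvpos k).ne') hlam2 (fun ℓ => (hlampos ℓ).ne') hne2 (by omega)
  have hMN : ∀ c, γ *ᵥ ((M + N) *ᵥ c) = 0 → c = 0 := fun c hc =>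
    eq_zero_of_of_add_of_mulVec_mem_span_one hv2 hlam2 (fun ℓ => (hlampos ℓ).ne') hne2
      (by omega) (by rwa [← hγker, LinearMap.mem_ker, toLin'_apply])
  rw [hζ, ker_toLin'_smul_diagonal_mul (div_pos hΔt hΔx).ne'
    (by rintro (k | k) <;> exact (hvpos k).ne')]
  refine ker_toLin'_fromBlocks_one_sub_one ?_ fun d => eq_zero_of_sub_mul_mulVec_eq_two_smul hγ1 hMN
  rw [toLin'_mul, LinearMap.ker_comp_of_ker_eq_bot _ hζker, hγker]
end

section
/- For the two-velocity Greenberg-Alt stationary system ∂_x f⁺ = -∂_x f⁻ = (1/(2ε))((1+εφ)f⁻ - (1-εφ)f⁺) on (0, Δx) with boundary data f⁺(0) = f⁺_{in} and f⁻(Δx) = f⁻_{in}, the outgoing values are f⁻(0) = f⁺_{in} + 2εφ(f⁺_{in} - e^{-φΔx} f⁻_{in})/(e^{-φΔx} - 1 - εφ(1+e^{-φΔx})) and f⁺(Δx) = f⁻_{in} - 2εφ(f⁺_{in} - e^{-φΔx} f⁻_{in})/(e^{-φΔx} - 1 - εφ(1+e^{-φΔx})). -/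
/-!
The difference `f⁺ - f⁻` has zero derivative, so the flux `J = (f⁺ - f⁻)/ε` is constant, and the
density `ρ = f⁺ + f⁻` solves the linear equation `ρ' = φρ - J`. Hence `(φρ - J) e^{-φx}` is
constant; comparing it at `0` and `Δx` gives one linear equation for `f⁺_in - f⁻(0)`, whose
coefficient is minus the denominator.
-/

open Set Real

theorem eq_of_forall_mem_Icc_hasDerivAt_zero {E : Type*} [NormedAddCommGroup E] [NormedSpace ℝ E]
    {f : ℝ → E} {a b : ℝ} (hf : ∀ x ∈ Icc a b, HasDerivAt f 0 x) :
    ∀ x ∈ Icc a b, f x = f a :=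
  constant_of_has_deriv_right_zero (fun x hx => (hf x hx).continuousAt.continuousWithinAt)
    (fun x hx => (hf x (Ico_subset_Icc_self hx)).hasDerivWithinAt)

theorem sub_eq_of_forall_mem_Icc_hasDerivAt {E : Type*} [NormedAddCommGroup E] [NormedSpace ℝ E]
    {f g h : ℝ → E} {a b : ℝ}
    (hf : ∀ x ∈ Icc a b, HasDerivAt f (h x) x) (hg : ∀ x ∈ Icc a b, HasDerivAt g (h x) x) :
    ∀ x ∈ Icc a b, f x - g x = f a - g a :=
  eq_of_forall_mem_Icc_hasDerivAt_zero fun x hx =>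
    ((hf x hx).sub (hg x hx)).congr_deriv (sub_self _)

theorem mul_exp_eq_of_forall_mem_Icc_hasDerivAt {ρ : ℝ → ℝ} {φ J a b : ℝ}
    (hρ : ∀ x ∈ Icc a b, HasDerivAt ρ (φ * ρ x - J) x) :
    ∀ x ∈ Icc a b, (φ * ρ x - J) * exp (-φ * x) = (φ * ρ a - J) * exp (-φ * a) := by
  refine eq_of_forall_mem_Icc_hasDerivAt_zero fun x hx => ?_
  have hexp : HasDerivAt (fun x => exp (-φ * x)) (exp (-φ * x) * (-φ)) x := by
    simpa using ((hasDerivAt_id x).const_mul (-φ)).exp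
  refine ((((hρ x hx).const_mul φ).sub_const J).mul hexp).congr_deriv ?_
  ring

theorem two_mul_greenbergAlt_rate {ε : ℝ} (hε : ε ≠ 0) (φ p m : ℝ) :
    2 * ((1 / (2 * ε)) * ((1 + ε * φ) * m - (1 - ε * φ) * p)) = φ * (p + m) - (p - m) / ε := by
  field_simp
  ring

theorem stmt_10_general (ε Δx φ fpin fmin : ℝ) (hε : 0 < ε) (hΔx : 0 < Δx)
    (hD : Real.exp (-φ * Δx) - 1 - ε * φ * (1 + Real.exp (-φ * Δx)) ≠ 0)
    (fp fm : ℝ → ℝ)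
    (hfp : ∀ x ∈ Set.Icc 0 Δx,
      HasDerivAt fp ((1 / (2 * ε)) * ((1 + ε * φ) * fm x - (1 - ε * φ) * fp x)) x)
    (hfm : ∀ x ∈ Set.Icc 0 Δx,
      HasDerivAt fm ((1 / (2 * ε)) * ((1 + ε * φ) * fm x - (1 - ε * φ) * fp x)) x)
    (hbc1 : fp 0 = fpin) (hbc2 : fm Δx = fmin) :
    fm 0 = fpin + 2 * ε * φ * (fpin - Real.exp (-φ * Δx) * fmin) /
        (Real.exp (-φ * Δx) - 1 - ε * φ * (1 + Real.exp (-φ * Δx))) ∧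
      fp Δx = fmin - 2 * ε * φ * (fpin - Real.exp (-φ * Δx) * fmin) /
        (Real.exp (-φ * Δx) - 1 - ε * φ * (1 + Real.exp (-φ * Δx))) := by
  obtain ⟨J, hJ⟩ : ∃ J, fpin - fm 0 = ε * J := ⟨(fpin - fm 0) / ε, by field_simp⟩
  have hflux : ∀ x ∈ Icc 0 Δx, fp x - fm x = ε * J := by
    simpa [hbc1, hJ] using sub_eq_of_forall_mem_Icc_hasDerivAt hfp hfm
  have hdensity : ∀ x ∈ Icc 0 Δx, HasDerivAt (fun x => fp x + fm x)
      (φ * (fp x + fm x) - J) x := fun x hx => by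
    refine ((hfp x hx).add (hfm x hx)).congr_deriv ?_
    rw [← two_mul, two_mul_greenbergAlt_rate hε.ne', hflux x hx, mul_div_cancel_left₀ _ hε.ne']
  have hΔ : Δx ∈ Icc 0 Δx := right_mem_Icc.mpr hΔx.le
  have hfpΔ : fp Δx = fmin + ε * J := by linarith [hflux Δx hΔ]
  have hfm0 : fm 0 = fpin - ε * J := by linarith
  have hrel := mul_exp_eq_of_forall_mem_Icc_hasDerivAt hdensity Δx hΔ
  simp only [hbc1, hbc2, hfpΔ, hfm0, mul_zero, exp_zero, mul_one] at hrel
  have hquot : 2 * ε * φ * (fpin - exp (-φ * Δx) * fmin) /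
      (exp (-φ * Δx) - 1 - ε * φ * (1 + exp (-φ * Δx))) = -(ε * J) := by
    rw [div_eq_iff hD]
    linear_combination -ε * hrel
  constructor
  · rw [hfm0, hquot]; ring
  · rw [hfpΔ, hquot]; ring

/-- Explicit outgoing values for the two-velocity Greenberg–Alt stationary system on
`(0, Δx)` with incoming boundary data `f⁺(0) = f⁺_in`, `f⁻(Δx) = f⁻_in`. -/
theorem stmt_10 (ε Δx φ fpin fmin : ℝ) (hε : 0 < ε) (hΔx : 0 < Δx) (hφ : φ ≠ 0)
    (hD : Real.exp (-φ * Δx) - 1 - ε * φ * (1 + Real.exp (-φ * Δx)) ≠ 0)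
    (fp fm : ℝ → ℝ)
    (hfp : ∀ x ∈ Set.Icc 0 Δx,
      HasDerivAt fp ((1 / (2 * ε)) * ((1 + ε * φ) * fm x - (1 - ε * φ) * fp x)) x)
    (hfm : ∀ x ∈ Set.Icc 0 Δx,
      HasDerivAt fm ((1 / (2 * ε)) * ((1 + ε * φ) * fm x - (1 - ε * φ) * fp x)) x)
    (hbc1 : fp 0 = fpin) (hbc2 : fm Δx = fmin) :
    fm 0 = fpin + 2 * ε * φ * (fpin - Real.exp (-φ * Δx) * fmin) /
        (Real.exp (-φ * Δx) - 1 - ε * φ * (1 + Real.exp (-φ * Δx))) ∧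
      fp Δx = fmin - 2 * ε * φ * (fpin - Real.exp (-φ * Δx) * fmin) /
        (Real.exp (-φ * Δx) - 1 - ε * φ * (1 + Real.exp (-φ * Δx))) :=
  stmt_10_general ε Δx φ fpin fmin hε hΔx hD fp fm hfp hfm hbc1 hbc2
end

section
/- Suppose the discrete nonzero eigenvalues λ_ℓ^ε of the chemotaxis kinetic model satisfy 1 = (1/2)Σ_{k=-K}^K ω_k T_ε(v_k)/(T_ε(v_k) - λ^ε v_k) with T_ε(v) = 1 + εφ(v∂_x S), where φ is odd, the quadrature set is symmetric (v_{-k} = -v_k, ω_{-k} = ω_k) with Σ_k ω_k = 1 (sum over k=-K..K counting symmetric pairs appropriately) and Σ ω_k v_k² = 1/3. If λ_0^ε = ελ_0^1 + ε²λ_0^2 + o(ε²) is the branch of eigenvalues with λ_0^ε → 0 and λ_0^1 ≠ 0, then λ_0^1 = 3 Σ_{k=1}^K ω_k v_k φ(v_k ∂_x S). -/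
/-!
Write `a_k = φ(v_k ∂_x S)` and rescale the eigenvalue as `λ = ε μ`. Since `φ` is odd, the two
velocities `±v_k` contribute `(1 + t)/(1 + t - s) + (1 - t)/(1 - t + s)` with `t = ε a_k`,
`s = ε μ v_k`, and this is `2 + 2 s (s - t) / (1 - (t - s)²)`. As `∑ ω_k = 1`, the eigenvalue
relation becomes `ε² μ · G(ε, μ) = 0` for a function `G = reducedEigenRelation` continuous at `(0, λ_0^1)`, so
`G(ε, λ/ε) = 0` for small `ε > 0`. The expansion of `λ` gives `λ/ε → λ_0^1`, and in the limit
`0 = G(0, λ_0^1) = λ_0^1 ∑ ω_k v_k² - ∑ ω_k v_k a_k = λ_0^1 / 3 - ∑ ω_k v_k a_k`.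
-/

open Filter Topology Asymptotics

lemma tendsto_div_of_isLittleO_sq {l : Filter ℝ} (hl : l ≤ 𝓝[≠] 0) {f : ℝ → ℝ} {a b : ℝ}
    (h : (fun ε => f ε - (ε * a + ε ^ 2 * b)) =o[l] fun ε => ε ^ 2) :
    Tendsto (fun ε => f ε / ε) l (𝓝 a) := by
  have hε : Tendsto (fun ε : ℝ => ε) l (𝓝 0) := hl.trans nhdsWithin_le_nhds
  have hrem : Tendsto (fun ε => (f ε - (ε * a + ε ^ 2 * b)) / ε ^ 2 * ε + (a + ε * b)) l
      (𝓝 (0 * 0 + (a + 0 * b))) :=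
    (h.tendsto_div_nhds_zero.mul hε).add (tendsto_const_nhds.add (hε.mul_const b))
  rw [zero_mul, zero_mul, zero_add, add_zero] at hrem
  refine hrem.congr' ?_
  filter_upwards [hl self_mem_nhdsWithin] with ε (hε0 : ε ≠ 0)
  field_simp
  ring

lemma pair_sum_eq (t s : ℝ) (hden : 1 - (t - s) ^ 2 ≠ 0) :
    (1 + t) / (1 + t - s) + (1 - t) / (1 - t + s) = 2 + 2 * s * (s - t) / (1 - (t - s) ^ 2) := by
  have hfac : 1 - (t - s) ^ 2 = (1 + t - s) * (1 - t + s) := by ring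
  rw [hfac] at hden ⊢
  have h₁ : 1 + t - s ≠ 0 := left_ne_zero_of_mul hden
  have h₂ : 1 - t + s ≠ 0 := right_ne_zero_of_mul hden
  field_simp
  ring

section ReducedRelation

variable {ι : Type*} [Fintype ι] (ω v a : ι → ℝ)

noncomputable def reducedEigenRelation (ε μ : ℝ) : ℝ :=
  ∑ k, ω k * v k * (μ * v k - a k) / (1 - (ε * (a k - μ * v k)) ^ 2)

lemma reducedEigenRelation_zero (μ : ℝ) :
    reducedEigenRelation ω v a 0 μ = μ * ∑ k, ω k * v k ^ 2 - ∑ k, ω k * v k * a k := by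
  simp only [reducedEigenRelation, zero_mul, ne_eq, OfNat.ofNat_ne_zero, not_false_eq_true,
    zero_pow, sub_zero, div_one, Finset.mul_sum, ← Finset.sum_sub_distrib]
  exact Finset.sum_congr rfl fun k _ => by ring

lemma continuousAt_reducedEigenRelation (μ : ℝ) :
    ContinuousAt (fun p : ℝ × ℝ => reducedEigenRelation ω v a p.1 p.2) (0, μ) := by
  unfold reducedEigenRelation
  fun_prop (disch := simp)

lemma half_sum_pair_eq (hsum : ∑ k, ω k = 1) (ε μ : ℝ)
    (hden : ∀ k, 1 - (ε * (a k - μ * v k)) ^ 2 ≠ 0) :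
    1 / 2 * ∑ k, ω k * ((1 + ε * a k) / (1 + ε * a k - ε * μ * v k) +
        (1 - ε * a k) / (1 - ε * a k + ε * μ * v k)) =
      1 + ε ^ 2 * μ * reducedEigenRelation ω v a ε μ := by
  have hterm : ∀ k, ω k * ((1 + ε * a k) / (1 + ε * a k - ε * μ * v k) +
      (1 - ε * a k) / (1 - ε * a k + ε * μ * v k)) =
      2 * ω k + 2 * (ε ^ 2 * μ) * (ω k * v k * (μ * v k - a k) /
        (1 - (ε * (a k - μ * v k)) ^ 2)) := by
    intro k
    have hden' : 1 - (ε * a k - ε * μ * v k) ^ 2 ≠ 0 := by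
      convert hden k using 2; ring
    rw [pair_sum_eq _ _ hden']
    ring_nf
  rw [Finset.sum_congr rfl fun k _ => hterm k, Finset.sum_add_distrib, ← Finset.mul_sum,
    ← Finset.mul_sum, hsum, reducedEigenRelation]
  ring

end ReducedRelation

theorem stmt_19_general (K : ℕ) (ω v : Fin K → ℝ)
    (hsum : ∑ k, ω k = 1) (hsum2 : ∑ k, ω k * v k ^ 2 = 1 / 3)
    (φ : ℝ → ℝ) (hφodd : ∀ u, φ (-u) = -φ u) (S' : ℝ)
    (lam : ℝ → ℝ) (lam1 lam2 : ℝ) (hlam1 : lam1 ≠ 0)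
    (hexp : (fun ε => lam ε - (ε * lam1 + ε ^ 2 * lam2)) =o[nhdsWithin 0 (Set.Ioi 0)]
      fun ε => ε ^ 2)
    (heig : ∀ᶠ ε in nhdsWithin (0 : ℝ) (Set.Ioi 0),
      1 = (1 / 2) * ∑ k, ω k *
        ((1 + ε * φ (v k * S')) / (1 + ε * φ (v k * S') - lam ε * v k) +
          (1 + ε * φ (-v k * S')) / (1 + ε * φ (-v k * S') + lam ε * v k))) :
    lam1 = 3 * ∑ k, ω k * v k * φ (v k * S') := by
  set a : Fin K → ℝ := fun k => φ (v k * S')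
  have hμ : Tendsto (fun ε => lam ε / ε) (𝓝[>] 0) (𝓝 lam1) :=
    tendsto_div_of_isLittleO_sq (nhdsWithin_mono _ fun _ h => ne_of_gt h) hexp
  have hpath : Tendsto (fun ε => (ε, lam ε / ε)) (𝓝[>] 0) (𝓝 (0, lam1)) :=
    (tendsto_nhdsWithin_of_tendsto_nhds tendsto_id).prodMk_nhds hμ
  have hden : ∀ᶠ ε in 𝓝[>] 0, ∀ k, 1 - (ε * (a k - lam ε / ε * v k)) ^ 2 ≠ 0 :=
    eventually_all.2 fun k =>
      ((Continuous.tendsto (f := fun p : ℝ × ℝ => 1 - (p.1 * (a k - p.2 * v k)) ^ 2)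
        (by fun_prop) _).comp hpath).eventually_ne (by simp)
  have hG : ∀ᶠ ε in 𝓝[>] 0, reducedEigenRelation ω v a ε (lam ε / ε) = 0 := by
    filter_upwards [heig, hden, hμ.eventually_ne hlam1, self_mem_nhdsWithin]
      with ε hrel hden hμ0 (hε : 0 < ε)
    rw [← mul_div_cancel₀ (lam ε) hε.ne'] at hrel
    simp only [neg_mul, hφodd, mul_neg, ← sub_eq_add_neg] at hrel
    rw [half_sum_pair_eq ω v a hsum _ _ hden] at hrel
    simpa [hε.ne', hμ0] using hrel
  have hlim : reducedEigenRelation ω v a 0 lam1 = 0 :=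
    tendsto_nhds_unique ((continuousAt_reducedEigenRelation ω v a lam1).tendsto.comp hpath)
      (tendsto_const_nhds.congr' (hG.mono fun _ h => h.symm))
  rw [reducedEigenRelation_zero, hsum2] at hlim
  linarith

/-- Expansion of the near-zero eigenvalue of the Othmer–Alt chemotaxis model: if
`λ_0^ε = ε λ_0^1 + ε² λ_0^2 + o(ε²)` is a branch of eigenvalues of the relation
`1 = (1/2) ∑_{k=-K}^K ω_k T_ε(v_k)/(T_ε(v_k) - λ^ε v_k)` with `T_ε(v) = 1 + ε φ(v ∂_x S)`,
`φ` odd, a symmetric quadrature normalized by `∑ ω_k = 1` and `∑ ω_k v_k² = 1/3`, and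
`λ_0^1 ≠ 0`, then `λ_0^1 = 3 ∑_{k=1}^K ω_k v_k φ(v_k ∂_x S)`. -/
theorem stmt_19 (K : ℕ) (ω v : Fin K → ℝ) (hω : ∀ k, 0 < ω k) (hvpos : ∀ k, 0 < v k)
    (hsum : ∑ k, ω k = 1) (hsum2 : ∑ k, ω k * v k ^ 2 = 1 / 3)
    (φ : ℝ → ℝ) (hφodd : ∀ u, φ (-u) = -φ u) (S' : ℝ)
    (lam : ℝ → ℝ) (lam1 lam2 : ℝ) (hlam1 : lam1 ≠ 0)
    (hexp : (fun ε => lam ε - (ε * lam1 + ε ^ 2 * lam2)) =o[nhdsWithin 0 (Set.Ioi 0)]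
      fun ε => ε ^ 2)
    (heig : ∀ᶠ ε in nhdsWithin (0 : ℝ) (Set.Ioi 0),
      1 = (1 / 2) * ∑ k, ω k *
        ((1 + ε * φ (v k * S')) / (1 + ε * φ (v k * S') - lam ε * v k) +
          (1 + ε * φ (-v k * S')) / (1 + ε * φ (-v k * S') + lam ε * v k))) :
    lam1 = 3 * ∑ k, ω k * v k * φ (v k * S') :=
  stmt_19_general K ω v hsum hsum2 φ hφodd S' lam lam1 lam2 hlam1 hexp heig
end
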